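/- arXiv:2111.14897 — 3 statements merged into one kernel-verified Lean document; each statement's English description precedes it below -/
import Mathlib

section
/- Let ω : [0,∞) → ℝ be defined by ω(r) = (1/2)∫₀^r ρ² e^{(1/2)∫_r^ρ φ'(z)² dz} [(1 + ρ²)φ'(ρ)² + 2 − 2cosh(√2 φ(ρ))] dρ with φ(r) = 1 − e^{−a²/r²} for a > 0. Then for all r > 0, 1 + r² − ω(r)/r > 0. -/
open Real MeasureTheory intervalIntegral

/-!
Since `cosh ≥ 1` and the exponential weight is at most `1` for `ρ ≤ r`, the integrand defining
`ω(r)` is at most `(1 + ρ²) (ρ φ'(ρ))²`. For the profile `φ(ρ) = 1 - e^{-a²/ρ²}` one has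
`ρ φ'(ρ) = -2 t e^{-t}` with `t = a²/ρ²`, so `|ρ φ'(ρ)| ≤ 2/e < 1`. Hence
`ω(r) ≤ (r + r³/3)/2 < r (1 + r²)`.
-/

noncomputable def massDensity (φ : ℝ → ℝ) (r ρ : ℝ) : ℝ :=
  ρ ^ 2 * exp ((1 / 2) * ∫ z in r..ρ, (deriv φ z) ^ 2) *
    ((1 + ρ ^ 2) * (deriv φ ρ) ^ 2 + 2 - 2 * cosh (√2 * φ ρ))

theorem massDensity_le {φ : ℝ → ℝ} {r ρ : ℝ} (hρr : ρ ≤ r) :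
    massDensity φ r ρ ≤ (1 + ρ ^ 2) * (ρ * deriv φ ρ) ^ 2 := by
  set E := exp ((1 / 2) * ∫ z in r..ρ, (deriv φ z) ^ 2)
  have hE_le : E ≤ 1 := by
    have : 0 ≤ ∫ z in ρ..r, (deriv φ z) ^ 2 := integral_nonneg hρr fun z _ ↦ sq_nonneg _
    rw [exp_le_one_iff, integral_symm]
    linarith
  have hcosh : 1 ≤ cosh (√2 * φ ρ) := one_le_cosh _
  have hρE : 0 ≤ ρ ^ 2 * E := by positivity
  calc massDensity φ r ρ ≤ ρ ^ 2 * E * ((1 + ρ ^ 2) * (deriv φ ρ) ^ 2) :=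
        mul_le_mul_of_nonneg_left (by linarith) hρE
    _ = E * ((1 + ρ ^ 2) * (ρ * deriv φ ρ) ^ 2) := by ring
    _ ≤ (1 + ρ ^ 2) * (ρ * deriv φ ρ) ^ 2 := mul_le_of_le_one_left (by positivity) hE_le

theorem hasDerivAt_one_sub_exp_neg_sq_div_sq (a : ℝ) {x : ℝ} (hx : x ≠ 0) :
    HasDerivAt (fun x ↦ 1 - exp (-a ^ 2 / x ^ 2))
      (-(2 * a ^ 2 / x ^ 3) * exp (-a ^ 2 / x ^ 2)) x := by
  have h : HasDerivAt (fun x ↦ -a ^ 2 / x ^ 2) (2 * a ^ 2 / x ^ 3) x := by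
    simp only [div_eq_mul_inv]
    exact ((hasDerivAt_pow 2 x).fun_inv (pow_ne_zero 2 hx) |>.const_mul (-a ^ 2)).congr_deriv
      (by field_simp; ring)
  exact (h.exp.const_sub 1).congr_deriv (by ring)

theorem abs_mul_deriv_one_sub_exp_neg_sq_div_sq_le (a ρ : ℝ) :
    |ρ * deriv (fun x ↦ 1 - exp (-a ^ 2 / x ^ 2)) ρ| ≤ 2 * exp (-1) := by
  rcases eq_or_ne ρ 0 with rfl | hρ
  · simp [exp_nonneg]
  have hρt : ρ * (-(2 * a ^ 2 / ρ ^ 3) * exp (-a ^ 2 / ρ ^ 2)) =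
      -(2 * (a ^ 2 / ρ ^ 2 * exp (-(a ^ 2 / ρ ^ 2)))) := by
    rw [neg_div]
    field_simp
  rw [(hasDerivAt_one_sub_exp_neg_sq_div_sq a hρ).deriv, hρt, abs_neg,
    abs_of_nonneg (by positivity)]
  linarith [mul_exp_neg_le_exp_neg_one (a ^ 2 / ρ ^ 2)]

/-- No integrability of `f` is needed: if it fails, `∫ f = 0 ≤ ∫ g`. -/
theorem intervalIntegral_le_of_le_of_nonneg {f g : ℝ → ℝ} {a b : ℝ} (hab : a ≤ b)
    (hg : IntervalIntegrable g volume a b) (hg_nonneg : ∀ x ∈ Set.Icc a b, 0 ≤ g x)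
    (hfg : ∀ x ∈ Set.Icc a b, f x ≤ g x) :
    ∫ x in a..b, f x ≤ ∫ x in a..b, g x := by
  by_cases hf : IntervalIntegrable f volume a b
  · exact integral_mono_on hab hf hg hfg
  · rw [integral_undef hf]
    exact integral_nonneg hab hg_nonneg

theorem integral_massDensity_le {φ : ℝ → ℝ} {r : ℝ} (hr : 0 ≤ r)
    (hφ : ∀ ρ ∈ Set.Icc 0 r, |ρ * deriv φ ρ| ≤ 1) :
    ∫ ρ in (0 : ℝ)..r, massDensity φ r ρ ≤ r + r ^ 3 / 3 := by
  have hdensity : ∀ ρ ∈ Set.Icc 0 r, massDensity φ r ρ ≤ 1 + ρ ^ 2 := fun ρ hρ ↦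
    calc massDensity φ r ρ ≤ (1 + ρ ^ 2) * (ρ * deriv φ ρ) ^ 2 := massDensity_le hρ.2
      _ ≤ 1 + ρ ^ 2 :=
        mul_le_of_le_one_right (by positivity) (sq_le_one_iff_abs_le_one _ |>.mpr (hφ ρ hρ))
  have hint : ∫ ρ in (0 : ℝ)..r, (1 + ρ ^ 2) = r + r ^ 3 / 3 := by
    rw [integral_add intervalIntegrable_const ((continuous_pow 2).intervalIntegrable 0 r)]
    norm_num [integral_pow]
  rw [← hint]
  exact intervalIntegral_le_of_le_of_nonneg hr
    ((by fun_prop : Continuous fun ρ : ℝ ↦ 1 + ρ ^ 2).intervalIntegrable 0 r)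
    (fun ρ _ ↦ by positivity) hdensity

theorem no_minimal_surfaces_general (a : ℝ) (φ ω : ℝ → ℝ)
    (hφ : ∀ r : ℝ, φ r = 1 - Real.exp (-a ^ 2 / r ^ 2))
    (hω : ∀ r : ℝ, ω r = (1 / 2) * ∫ ρ in (0 : ℝ)..r,
      ρ ^ 2 * Real.exp ((1 / 2) * ∫ z in r..ρ, (deriv φ z) ^ 2) *
        ((1 + ρ ^ 2) * (deriv φ ρ) ^ 2 + 2 - 2 * Real.cosh (Real.sqrt 2 * φ ρ))) :
    ∀ r : ℝ, 0 < r → 0 < 1 + r ^ 2 - ω r / r := by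
  intro r hr
  have hφ_eq : φ = fun x ↦ 1 - exp (-a ^ 2 / x ^ 2) := funext hφ
  have hbound : ∀ ρ ∈ Set.Icc 0 r, |ρ * deriv φ ρ| ≤ 1 := fun ρ _ ↦
    hφ_eq ▸ (abs_mul_deriv_one_sub_exp_neg_sq_div_sq_le a ρ).trans
      (by linarith [exp_neg_one_lt_half])
  have hω_le := integral_massDensity_le hr.le hbound
  have hω_eq : ω r = (1 / 2) * ∫ ρ in (0 : ℝ)..r, massDensity φ r ρ := hω r
  rw [sub_pos, div_lt_iff₀ hr]
  nlinarith [pow_pos hr 3]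

/-- For the scalar profile `φ(r) = 1 − e^{−a²/r²}` and the quasi-local mass
`ω(r)` solving the time-symmetric maximal-slice constraints, the metric factor
`1 + r² − ω(r)/r` is strictly positive for all `r > 0` (no minimal surfaces). -/
theorem no_minimal_surfaces (a : ℝ) (ha : 0 < a) (φ ω : ℝ → ℝ)
    (hφ : ∀ r : ℝ, φ r = 1 - Real.exp (-a ^ 2 / r ^ 2))
    (hω : ∀ r : ℝ, ω r = (1 / 2) * ∫ ρ in (0 : ℝ)..r,
      ρ ^ 2 * Real.exp ((1 / 2) * ∫ z in r..ρ, (deriv φ z) ^ 2) *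
        ((1 + ρ ^ 2) * (deriv φ ρ) ^ 2 + 2 - 2 * Real.cosh (Real.sqrt 2 * φ ρ))) :
    ∀ r : ℝ, 0 < r → 0 < 1 + r ^ 2 - ω r / r :=
  no_minimal_surfaces_general a φ ω hφ hω
end

section
/- Let f̂(t) = cos(t/4) sin³(t/4)/(1 − 2cos(t/2))². Then as t → t* = 2π/3 from below, f̂(t) = 1/(4√3 (t* − t)²) − 1/(8(t* − t)) + O(1), and as t → 0⁺, f̂(t) = t³/64 + O(t⁵). -/
/-!
With `τ = tan (t / 4)` one has `f̂ = τ³ / (1 - 3τ²)²`. Near `t = 0` this is `τ³ + O(τ⁵)`, and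
`tan y = y + O(y³)`. Near `t* = 2π/3` put `T = tan ((t* - t) / 4)`: then
`τ = (1 - √3 T) / (√3 + T)`, and `f̂` is exactly `1 / (64√3 T²) - 1 / (32 T)` plus a rational
function of `T` that is regular at `T = 0`. Replacing `T` by `(t* - t) / 4` in the principal part
costs only `O(1)`, again because `tan x - x = O(x³)`.
-/

open Real Filter Topology Asymptotics

lemma abs_tan_sub_self_le {x : ℝ} (hx : |x| ≤ 1) : |tan x - x| ≤ 4 / 3 * |x| ^ 3 := by
  have hx2 : x ^ 2 ≤ 1 := by nlinarith [sq_abs x, abs_nonneg x]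
  have hcos : 1 / 2 ≤ cos x := by linarith [one_sub_sq_div_two_le_cos (x := x)]
  have hsin : |sin x - x| ≤ |x| ^ 3 / 6 := by rw [abs_sub_comm]; exact abs_sub_sin_le x
  have hcos' : |1 - cos x| ≤ |x| ^ 2 / 2 := by
    rw [abs_of_nonneg (by linarith [cos_le_one x]), sq_abs]
    linarith [one_sub_sq_div_two_le_cos (x := x)]
  have hid : tan x - x = ((sin x - x) + x * (1 - cos x)) / cos x := by
    rw [tan_eq_sin_div_cos]; field_simp; ring
  rw [hid, abs_div, abs_of_pos (show 0 < cos x by linarith), div_le_iff₀ (by linarith)]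
  calc |sin x - x + x * (1 - cos x)| ≤ |sin x - x| + |x| * |1 - cos x| := by
        rw [← abs_mul]; exact abs_add_le _ _
    _ ≤ |x| ^ 3 / 6 + |x| * (|x| ^ 2 / 2) := by gcongr
    _ ≤ 4 / 3 * |x| ^ 3 * cos x := by nlinarith [pow_nonneg (abs_nonneg x) 3]

lemma tan_sub_self_le {x : ℝ} (hx₀ : 0 ≤ x) (hx₁ : x ≤ 1) : tan x - x ≤ 4 / 3 * x ^ 3 := by
  simpa [abs_of_nonneg hx₀] using
    (le_abs_self _).trans (abs_tan_sub_self_le (abs_le.2 ⟨by linarith, hx₁⟩))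

lemma self_le_tan_of_le_one {x : ℝ} (hx₀ : 0 ≤ x) (hx₁ : x ≤ 1) : x ≤ tan x :=
  le_tan hx₀ (by linarith [pi_gt_three])

lemma isBigO_tan : (fun x => tan x) =O[𝓝 0] (fun x => x) := by
  simpa using (hasDerivAt_tan (x := 0) (by simp)).isBigO_sub

lemma isBigO_tan_sub_self : (fun x => tan x - x) =O[𝓝 0] (fun x => x ^ 3) := by
  refine IsBigO.of_bound (4 / 3) ?_
  filter_upwards [Icc_mem_nhds (show (-1 : ℝ) < 0 by norm_num) one_pos] with x hx
  simpa [norm_pow] using abs_tan_sub_self_le (abs_le.2 hx)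

lemma isBigO_tan_pow_three_sub_pow_three :
    (fun x => tan x ^ 3 - x ^ 3) =O[𝓝 0] (fun x => x ^ 5) := by
  have hsum : (fun x => tan x ^ 2 + tan x * x + x ^ 2) =O[𝓝 0] (fun x => x ^ 2) :=
    ((isBigO_tan.pow 2).add ((isBigO_tan.mul (isBigO_refl _ _)).congr_right fun x => by ring)).add
      (isBigO_refl _ _)
  exact (isBigO_tan_sub_self.mul hsum).congr (fun x => by ring) (fun x => by ring)

lemma isBigO_inv_tan_sub_inv :
    (fun x => (tan x)⁻¹ - x⁻¹) =O[𝓝[>] 0] (fun _ => (1 : ℝ)) := by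
  refine IsBigO.of_bound (4 / 3) ?_
  filter_upwards [Ioc_mem_nhdsGT one_pos] with x ⟨hx₀, hx₁⟩
  have hT := self_le_tan_of_le_one hx₀.le hx₁
  have hT' := tan_sub_self_le hx₀.le hx₁
  have hxT : 0 < x * tan x := mul_pos hx₀ (hx₀.trans_le hT)
  rw [norm_one, mul_one, norm_sub_rev, Real.norm_eq_abs, inv_sub_inv hx₀.ne' (by linarith),
    abs_of_nonneg (div_nonneg (by linarith) hxT.le), div_le_iff₀ hxT]
  nlinarith [mul_le_mul_of_nonneg_left hT hx₀.le, mul_le_mul_of_nonneg_left hx₁ (sq_nonneg x)]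

lemma isBigO_inv_tan_sq_sub_inv_sq :
    (fun x => (tan x ^ 2)⁻¹ - (x ^ 2)⁻¹) =O[𝓝[>] 0] (fun _ => (1 : ℝ)) := by
  refine IsBigO.of_bound 5 ?_
  filter_upwards [Ioc_mem_nhdsGT one_pos] with x ⟨hx₀, hx₁⟩
  have hT := self_le_tan_of_le_one hx₀.le hx₁
  have hT' := tan_sub_self_le hx₀.le hx₁
  have hT₀ : 0 < tan x := hx₀.trans_le hT
  have hsq : x ^ 2 ≤ tan x ^ 2 := pow_le_pow_left₀ hx₀.le hT 2
  have hxT : 0 < x ^ 2 * tan x ^ 2 := by positivity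
  rw [norm_one, mul_one, norm_sub_rev, Real.norm_eq_abs, inv_sub_inv (by positivity)
    (by positivity), abs_of_nonneg (div_nonneg (by linarith) hxT.le), div_le_iff₀ hxT]
  have hsum : tan x + x ≤ 10 / 3 * x := by
    nlinarith [mul_le_mul_of_nonneg_left hx₁ (sq_nonneg x)]
  have hdiff : tan x ^ 2 - x ^ 2 ≤ 40 / 9 * x ^ 4 := by
    rw [sq_sub_sq]
    exact (mul_le_mul hsum hT' (by linarith) (by positivity)).trans_eq (by ring)
  nlinarith [mul_le_mul_of_nonneg_left hsq (sq_nonneg x)]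

lemma tan_pi_div_six_sub {σ : ℝ} (hσ : cos σ ≠ 0) :
    tan (π / 6 - σ) = (1 - √3 * tan σ) / (√3 + tan σ) := by
  rw [tan_eq_sin_div_cos, tan_eq_sin_div_cos, sin_sub, cos_sub, sin_pi_div_six, cos_pi_div_six,
    show 1 - √3 * (sin σ / cos σ) = (cos σ - √3 * sin σ) / cos σ by field_simp,
    show √3 + sin σ / cos σ = (√3 * cos σ + sin σ) / cos σ by field_simp,
    div_div_div_cancel_right₀ hσ,
    show 1 / 2 * cos σ - √3 / 2 * sin σ = (cos σ - √3 * sin σ) / 2 by ring,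
    show √3 / 2 * cos σ + 1 / 2 * sin σ = (√3 * cos σ + sin σ) / 2 by ring,
    div_div_div_cancel_right₀ two_ne_zero]

noncomputable def frwRational (τ : ℝ) : ℝ := τ ^ 3 / (1 - 3 * τ ^ 2) ^ 2

lemma cos_mul_sin_pow_three_div_eq_frwRational_tan {y : ℝ} (hy : cos y ≠ 0) :
    cos y * sin y ^ 3 / (1 - 2 * cos (2 * y)) ^ 2 = frwRational (tan y) := by
  have hsin : sin y = cos y * tan y := by rw [tan_eq_sin_div_cos]; field_simp
  have hden : 1 - 2 * cos (2 * y) = cos y ^ 2 * (3 * tan y ^ 2 - 1) := by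
    rw [cos_two_mul]
    linear_combination (-3 : ℝ) * sin_sq_add_cos_sq y + 3 * (sin y + cos y * tan y) * hsin
  rw [hden, hsin, frwRational, mul_pow, mul_pow, ← mul_assoc, ← pow_succ',
    show (3 * tan y ^ 2 - 1) ^ 2 = (1 - 3 * tan y ^ 2) ^ 2 by ring, ← pow_mul,
    mul_div_mul_left _ _ (pow_ne_zero _ hy)]

lemma isBigO_frwRational_sub_cube :
    (fun τ => frwRational τ - τ ^ 3) =O[𝓝 0] (fun τ => τ ^ 5) := by
  have hden : ∀ᶠ τ in 𝓝 (0 : ℝ), 1 - 3 * τ ^ 2 ≠ 0 :=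
    (by fun_prop : Continuous fun τ : ℝ => 1 - 3 * τ ^ 2).continuousAt.eventually_ne
      (by norm_num)
  have hbdd : (fun τ : ℝ => (6 - 9 * τ ^ 2) / (1 - 3 * τ ^ 2) ^ 2) =O[𝓝 0] (fun _ => (1 : ℝ)) :=
    ((by fun_prop : Continuous fun τ : ℝ => 6 - 9 * τ ^ 2).continuousAt.div
      (by fun_prop : Continuous fun τ : ℝ => (1 - 3 * τ ^ 2) ^ 2).continuousAt
      (by norm_num)).tendsto.isBigO_one ℝ
  refine ((isBigO_refl _ _).mul hbdd).congr' ?_ (.of_forall fun τ => mul_one _)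
  filter_upwards [hden] with τ hτ
  have hτ2 : (1 - 3 * τ ^ 2) ^ 2 ≠ 0 := pow_ne_zero 2 hτ
  rw [frwRational, mul_div_assoc', div_sub' hτ2, div_left_inj' hτ2]
  ring

lemma frwRational_laurent {T : ℝ} (hT : T ≠ 0) (hT₁ : √3 - T ≠ 0) (hT₂ : √3 + T ≠ 0) :
    frwRational ((1 - √3 * T) / (√3 + T)) = 1 / (64 * √3 * T ^ 2) - 1 / (32 * T) +
      (5 * √3 / 3 + 2 * T - 3 * √3 * T ^ 2) / (64 * (√3 - T) ^ 2) := by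
  have h3 : √3 ^ 2 = 3 := sq_sqrt (by norm_num)
  have hden : 1 - 3 * ((1 - √3 * T) / (√3 + T)) ^ 2 = 8 * T * (√3 - T) / (√3 + T) ^ 2 := by
    field_simp; linear_combination (1 - 3 * T ^ 2) * h3
  rw [frwRational, hden]
  field_simp
  linear_combination 2048 * (T ^ 2 - 3 * √3 * T + 9 * √3 ^ 2 * T ^ 2 - 3 * √3 ^ 2 * T ^ 4
    - 3 * √3 ^ 3 * T ^ 3) * h3

lemma isBigO_frwRational_tan_pi_div_six_sub :
    (fun σ => frwRational (tan (π / 6 - σ)) - (1 / (64 * √3 * σ ^ 2) - 1 / (32 * σ)))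
      =O[𝓝[>] 0] (fun _ => (1 : ℝ)) := by
  have hregular : (fun σ => (5 * √3 / 3 + 2 * tan σ - 3 * √3 * tan σ ^ 2) /
      (64 * (√3 - tan σ) ^ 2)) =O[𝓝[>] 0] (fun _ => (1 : ℝ)) := by
    refine (ContinuousAt.tendsto ?_).mono_left nhdsWithin_le_nhds |>.isBigO_one ℝ
    have htan : ContinuousAt tan 0 := continuousAt_tan.2 (by simp)
    exact (by fun_prop : ContinuousAt (fun T => 5 * √3 / 3 + 2 * T - 3 * √3 * T ^ 2) (tan 0)).comp
      htan |>.div ((by fun_prop : ContinuousAt (fun T => 64 * (√3 - T) ^ 2) (tan 0)).comp htan)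
      (by simp)
  refine (((isBigO_inv_tan_sq_sub_inv_sq.const_mul_left (1 / (64 * √3))).sub
    (isBigO_inv_tan_sub_inv.const_mul_left (1 / 32))).add hregular).congr' ?_ .rfl
  filter_upwards [Ioo_mem_nhdsGT one_pos] with σ ⟨hσ₀, hσ₁⟩
  have hπ : 1 < π / 3 := by linarith [pi_gt_three]
  have hT₀ : 0 < tan σ := tan_pos_of_pos_of_lt_pi_div_two hσ₀ (by linarith)
  have hT₁ : tan σ < √3 := tan_pi_div_three ▸ tan_lt_tan_of_lt_of_lt_pi_div_two (by linarith)
    (by linarith) (by linarith)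
  rw [tan_pi_div_six_sub (cos_pos_of_mem_Ioo ⟨by linarith, by linarith⟩).ne',
    frwRational_laurent hT₀.ne' (sub_pos.2 hT₁).ne' (by positivity)]
  ring

lemma isBigO_frwRational_tan_div_four_sub_laurent :
    (fun t => frwRational (tan (t / 4)) -
        (1 / (4 * √3 * (2 * π / 3 - t) ^ 2) - 1 / (8 * (2 * π / 3 - t))))
      =O[𝓝[<] (2 * π / 3)] (fun _ => (1 : ℝ)) := by
  have hσ : Tendsto (fun t => (2 * π / 3 - t) / 4) (𝓝[<] (2 * π / 3)) (𝓝[>] 0) := by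
    refine tendsto_nhdsWithin_iff.2 ⟨?_, ?_⟩
    · exact ((by fun_prop : Continuous fun t : ℝ => (2 * π / 3 - t) / 4).tendsto' _ _
        (by ring)).mono_left nhdsWithin_le_nhds
    · filter_upwards [self_mem_nhdsWithin] with t (ht : t < 2 * π / 3)
      exact div_pos (sub_pos.2 ht) four_pos
  refine (isBigO_frwRational_tan_pi_div_six_sub.comp_tendsto hσ).congr (fun t => ?_) fun _ => rfl
  simp only [Function.comp]
  ring_nf

lemma isBigO_frwRational_tan_div_four_sub_cube :
    (fun t => frwRational (tan (t / 4)) - t ^ 3 / 64) =O[𝓝 0] (fun t => t ^ 5) := by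
  have htan : Tendsto tan (𝓝 0) (𝓝 0) := by
    simpa using (continuousAt_tan.2 (by simp : cos 0 ≠ 0)).tendsto
  have hquarter : Tendsto (fun t : ℝ => t / 4) (𝓝 0) (𝓝 0) := by
    simpa using (continuous_id.div_const (4 : ℝ)).tendsto 0
  have hy : (fun y => frwRational (tan y) - y ^ 3) =O[𝓝 0] (fun y => y ^ 5) :=
    (((isBigO_frwRational_sub_cube.comp_tendsto htan).trans (isBigO_tan.pow 5)).add
      isBigO_tan_pow_three_sub_pow_three).congr_left fun y => by simp only [Function.comp]; ring
  refine ((hy.comp_tendsto hquarter).trans ?_).congr_left fun t => by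
    simp only [Function.comp]; ring
  exact (isBigO_const_mul_self (1 / 4 ^ 5 : ℝ) _ _).congr_left fun t => by
    simp only [Function.comp]; ring

/-- Asymptotics of `fhat(t) = cos(t/4) sin³(t/4)/(1 − 2cos(t/2))²`: as
`t → t* = 2π/3` from below, `fhat(t) = 1/(4√3 (t*−t)²) − 1/(8(t*−t)) + O(1)`,
and as `t → 0⁺`, `fhat(t) = t³/64 + O(t⁵)`. -/
theorem FRW_tortoise_generating_function_asymptotics (fhat : ℝ → ℝ)
    (hfhat : ∀ t : ℝ, fhat t = Real.cos (t / 4) * Real.sin (t / 4) ^ 3 /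
      (1 - 2 * Real.cos (t / 2)) ^ 2) :
    ((fun t : ℝ => fhat t -
        (1 / (4 * Real.sqrt 3 * (2 * π / 3 - t) ^ 2) - 1 / (8 * (2 * π / 3 - t))))
      =O[𝓝[<] (2 * π / 3)] fun _ : ℝ => (1 : ℝ)) ∧
      ((fun t : ℝ => fhat t - t ^ 3 / 64) =O[𝓝[>] 0] fun t : ℝ => t ^ 5) := by
  have hpos : (0 : ℝ) < 2 * π / 3 := by positivity
  have hfhat_eq : ∀ t ∈ Set.Ioo 0 (2 * π / 3), fhat t = frwRational (tan (t / 4)) := by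
    rintro t ⟨ht₀, ht₁⟩
    rw [hfhat, show t / 2 = 2 * (t / 4) by ring, cos_mul_sin_pow_three_div_eq_frwRational_tan
      (cos_pos_of_mem_Ioo ⟨by linarith [pi_pos], by linarith [pi_pos]⟩).ne']
  constructor
  · refine isBigO_frwRational_tan_div_four_sub_laurent.congr' ?_ .rfl
    filter_upwards [Ioo_mem_nhdsLT hpos] with t ht
    rw [hfhat_eq t ht]
  · refine (isBigO_frwRational_tan_div_four_sub_cube.mono nhdsWithin_le_nhds).congr' ?_ .rfl
    filter_upwards [Ioo_mem_nhdsGT hpos] with t ht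
    rw [hfhat_eq t ht]
end

section
/- In the static-cylinder Fefferman–Graham frame with h(w, t) = 1 − √w · √(2c²/((c+1) cos t)), the regulated volume of the extremal slice anchored at boundary time t₀ ∈ (−π/2, π/2) is vol[Σ_{t₀}] = vol[S^{d−1}][ε^{−d+1}/(d−1) − ((d−1)/(d−3/2)) ε^{−d+3/2} √(2c²/((c+1) cos t₀)) + O(ε^{−d+2})], and consequently d vol[Σ_t]/dt = −ε^{−(d−3/2)} ((d−1)/(d−3/2)) √(c²/(2(c+1))) · sin t/(cos t)^{3/2} + O(ε^{−d+2}), which is negative for 0 < t < π/2. -/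
/-!
Expanding `(1 - √w a)^(d-1)` binomially turns the volume integral into a finite sum of power
integrals `∫_ε^1 w^(k/2-d)`, each equal to `(1 - ε^(k/2-d+1))/(k/2-d+1)`; as a function of `t` it is
a polynomial in `a = g t`. The terms `k = 0, 1` give the two displayed orders, and every term with
`k ≥ 2` is `O(ε^(-d+2))`. Differentiating this polynomial in `t` kills the `k = 0` term, and the
chain rule with `g'(t) = √(c²/(2(c+1))) sin t / (cos t)^(3/2)` gives the rate.
-/

open Real Filter Topology Asymptotics MeasureTheory intervalIntegral Finset

theorem integral_one_sub_sqrt_mul_pow_mul_rpow (n : ℕ) {p a ε : ℝ} (hε : 0 < ε)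
    (hp : ∀ k ≤ n, (k : ℝ) / 2 + p ≠ -1) :
    ∫ w in ε..1, (1 - √w * a) ^ n * w ^ p =
      ∑ k ∈ range (n + 1), (n.choose k : ℝ) * (-a) ^ k *
        ((1 - ε ^ ((k : ℝ) / 2 + p + 1)) / ((k : ℝ) / 2 + p + 1)) := by
  have hpos : ∀ w ∈ Set.uIcc ε 1, 0 < w := fun w hw => by
    rcases Set.mem_uIcc.mp hw with h | h <;> linarith [h.1]
  have h0 : (0 : ℝ) ∉ Set.uIcc ε 1 := fun h => lt_irrefl _ (hpos 0 h)
  have hexpand : Set.EqOn (fun w => (1 - √w * a) ^ n * w ^ p)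
      (fun w => ∑ k ∈ range (n + 1), (n.choose k : ℝ) * (-a) ^ k * w ^ ((k : ℝ) / 2 + p))
      (Set.uIcc ε 1) := by
    intro w hw
    have hw0 := hpos w hw
    simp only [sub_eq_neg_add, add_pow, one_pow, mul_one, sum_mul]
    refine sum_congr rfl fun k _ => ?_
    rw [rpow_add hw0, neg_mul_eq_mul_neg, mul_comm √w, mul_pow, sqrt_eq_rpow,
      ← rpow_natCast (w ^ _), ← rpow_mul hw0.le, one_div_mul_eq_div]
    ring
  rw [integral_congr hexpand, integral_finsetSum fun k _ =>
    (intervalIntegrable_rpow (Or.inr h0)).const_mul _]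
  refine sum_congr rfl fun k hk => ?_
  have hk' : (k : ℝ) / 2 + p ≠ -1 := hp k (Nat.lt_succ_iff.mp (mem_range.mp hk))
  rw [intervalIntegral.integral_const_mul, integral_rpow (Or.inr ⟨hk', h0⟩), one_rpow]

theorem rpow_isBigO_rpow_nhdsGT_zero {β γ : ℝ} (h : γ ≤ β) :
    (fun ε : ℝ => ε ^ β) =O[𝓝[>] 0] fun ε => ε ^ γ := by
  refine IsBigO.of_bound 1 ?_
  filter_upwards [Ioc_mem_nhdsGT zero_lt_one] with ε hε
  rw [norm_of_nonneg (rpow_nonneg hε.1.le _), norm_of_nonneg (rpow_nonneg hε.1.le _), one_mul]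
  exact rpow_le_rpow_of_exponent_ge hε.1 hε.2 h

theorem sum_mul_one_sub_rpow_div_sub_isBigO (n : ℕ) {q : ℝ} (hq : 2 ≤ q) (b : ℕ → ℝ) :
    (fun ε : ℝ => ∑ k ∈ range (n + 2), b k *
        ((1 - ε ^ ((k : ℝ) / 2 + -q + 1)) / ((k : ℝ) / 2 + -q + 1))
      - b 0 * ε ^ (-q + 1) / (q - 1) - b 1 * ε ^ (-q + 3 / 2) / (q - 3 / 2))
      =O[𝓝[>] 0] fun ε => ε ^ (-q + 2) := by
  have hconst : (fun _ : ℝ => (1 : ℝ)) =O[𝓝[>] 0] fun ε => ε ^ (-q + 2) := by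
    simpa only [rpow_zero] using rpow_isBigO_rpow_nhdsGT_zero (by linarith : -q + 2 ≤ 0)
  have hsplit : ∀ ε : ℝ, ∑ k ∈ range (n + 2), b k *
        ((1 - ε ^ ((k : ℝ) / 2 + -q + 1)) / ((k : ℝ) / 2 + -q + 1))
      - b 0 * ε ^ (-q + 1) / (q - 1) - b 1 * ε ^ (-q + 3 / 2) / (q - 3 / 2)
      = ∑ k ∈ range n, b (k + 2) / ((k : ℝ) / 2 + -q + 2) * (1 - ε ^ ((k : ℝ) / 2 + -q + 2))
        + (b 0 / (-q + 1) + b 1 / (-q + 3 / 2)) := by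
    intro ε
    -- the subtracted terms are the `ε`-dependent parts of the summands `k = 0, 1`
    have hexp : ∀ k : ℕ, ((k + 1 + 1 : ℕ) : ℝ) / 2 + -q + 1 = (k : ℝ) / 2 + -q + 2 := fun k => by
      push_cast; ring
    have hexp0 : ((0 : ℕ) : ℝ) / 2 + -q + 1 = -q + 1 := by push_cast; ring
    have hexp1 : ((1 : ℕ) : ℝ) / 2 + -q + 1 = -q + 3 / 2 := by push_cast; ring
    have hq₁ : q - 1 = -(-q + 1) := by ring
    have hq₂ : q - 3 / 2 = -(-q + 3 / 2) := by ring
    rw [sum_range_succ', sum_range_succ', hq₁, hq₂]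
    simp only [hexp, hexp0, hexp1, Nat.add_assoc, Nat.reduceAdd, mul_div_assoc', div_neg,
      div_mul_eq_mul_div]
    ring
  simp only [hsplit]
  refine (IsBigO.fun_sum fun k _ => IsBigO.const_mul_left ?_ _).add
    ((isBigO_const_const _ one_ne_zero _).trans hconst)
  refine hconst.sub (rpow_isBigO_rpow_nhdsGT_zero ?_)
  linarith [(Nat.cast_nonneg k : (0 : ℝ) ≤ k)]

theorem hasDerivAt_integral_one_sub_sqrt_mul_pow_mul_rpow (n : ℕ) {p ε t f' : ℝ} {f : ℝ → ℝ}
    (hε : 0 < ε) (hp : ∀ k ≤ n, (k : ℝ) / 2 + p ≠ -1) (hf : HasDerivAt f f' t) :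
    HasDerivAt (fun t => ∫ w in ε..1, (1 - √w * f t) ^ n * w ^ p)
      (∑ k ∈ range (n + 1), (n.choose k : ℝ) * (k * (-f t) ^ (k - 1) * -f') *
        ((1 - ε ^ ((k : ℝ) / 2 + p + 1)) / ((k : ℝ) / 2 + p + 1))) t := by
  simp only [integral_one_sub_sqrt_mul_pow_mul_rpow n hε hp]
  exact HasDerivAt.fun_sum fun k _ => ((hf.fun_neg.fun_pow k).const_mul _).mul_const _

theorem hasDerivAt_sqrt_div_cos {K t : ℝ} (hK : 0 < K) (ht : 0 < cos t) :
    HasDerivAt (fun t => √(K / cos t)) (√K * sin t / (2 * cos t ^ ((3 : ℝ) / 2))) t := by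
  have hsqrt : HasDerivAt (fun t => √(cos t)) (-sin t / (2 * √(cos t))) t :=
    (hasDerivAt_cos t).sqrt ht.ne'
  have h32 : cos t ^ ((3 : ℝ) / 2) = cos t * √(cos t) := by
    rw [show (3 : ℝ) / 2 = 1 + 1 / 2 by norm_num, rpow_add ht, rpow_one, sqrt_eq_rpow]
  have hs : 0 < √(cos t) := sqrt_pos.mpr ht
  simp only [sqrt_div hK.le]
  refine ((hasDerivAt_const t √K).div hsqrt hs.ne').congr_deriv ?_
  rw [h32, sq, mul_self_sqrt ht.le]
  field_simp
  ring

theorem hasDerivAt_sqrt_two_mul_sq_div_mul_cos {c t : ℝ} (hc : 0 < c) (ht : 0 < cos t) :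
    HasDerivAt (fun t => √(2 * c ^ 2 / ((c + 1) * cos t)))
      (√(c ^ 2 / (2 * (c + 1))) * sin t / cos t ^ ((3 : ℝ) / 2)) t := by
  have hK : √(2 * c ^ 2 / (c + 1)) = 2 * √(c ^ 2 / (2 * (c + 1))) := by
    rw [show 2 * c ^ 2 / (c + 1) = 2 ^ 2 * (c ^ 2 / (2 * (c + 1))) by field_simp,
      sqrt_mul (by positivity), sqrt_sq zero_le_two]
  simp only [← div_div]
  refine (hasDerivAt_sqrt_div_cos (by positivity) ht).congr_deriv ?_
  rw [hK]
  field_simp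

theorem static_cylinder_complexity_decrease_general (d : ℕ) (hd : 2 ≤ d)
    (c volS : ℝ) (hc : 0 < c)
    (g : ℝ → ℝ) (hg : ∀ t : ℝ, g t = Real.sqrt (2 * c ^ 2 / ((c + 1) * Real.cos t)))
    (Vol : ℝ → ℝ → ℝ)
    (hVol : ∀ t ε : ℝ, Vol t ε =
      volS * ∫ w in ε..1, (1 - Real.sqrt w * g t) ^ (d - 1) * w ^ (-(d : ℝ)))
    (t₀ : ℝ) (ht₀ : t₀ ∈ Set.Ioo (-(π / 2)) (π / 2)) :
    ((fun ε : ℝ => Vol t₀ ε - volS * (ε ^ (-(d : ℝ) + 1) / ((d : ℝ) - 1)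
        - ((d : ℝ) - 1) / ((d : ℝ) - 3 / 2) * ε ^ (-(d : ℝ) + 3 / 2) * g t₀))
      =O[𝓝[>] 0] fun ε : ℝ => ε ^ (-(d : ℝ) + 2)) ∧
    ((fun ε : ℝ => deriv (fun t => Vol t ε) t₀
        + ε ^ (-(d : ℝ) + 3 / 2) * (((d : ℝ) - 1) / ((d : ℝ) - 3 / 2)) * volS *
          Real.sqrt (c ^ 2 / (2 * (c + 1))) * Real.sin t₀ / Real.cos t₀ ^ ((3 : ℝ) / 2))
      =O[𝓝[>] 0] fun ε : ℝ => ε ^ (-(d : ℝ) + 2)) ∧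
    (0 < t₀ → 0 < Real.sin t₀ / Real.cos t₀ ^ ((3 : ℝ) / 2)) := by
  obtain ⟨n, rfl⟩ : ∃ n, d = n + 2 := ⟨d - 2, by omega⟩
  simp only [show n + 2 - 1 = n + 1 from rfl] at hVol
  have hcos : 0 < cos t₀ := cos_pos_of_mem_Ioo ht₀
  have hp : ∀ k ≤ n + 1, (k : ℝ) / 2 + -((n + 2 : ℕ) : ℝ) ≠ -1 := fun k hk => by
    have : (k : ℝ) ≤ n + 1 := by exact_mod_cast hk
    push_cast
    linarith
  have hO := fun b => (sum_mul_one_sub_rpow_div_sub_isBigO n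
    (q := ((n + 2 : ℕ) : ℝ)) (by push_cast; linarith) b).const_mul_left volS
  have hg' : HasDerivAt g (√(c ^ 2 / (2 * (c + 1))) * sin t₀ / cos t₀ ^ ((3 : ℝ) / 2)) t₀ := by
    simpa only [← funext hg] using hasDerivAt_sqrt_two_mul_sq_div_mul_cos hc hcos
  refine ⟨?_, ?_, fun ht => div_pos (sin_pos_of_pos_of_lt_pi ht (by linarith [ht₀.2, pi_pos]))
    (rpow_pos_of_pos hcos _)⟩
  · refine EventuallyEq.trans_isBigO ?_ (hO fun k => ((n + 1).choose k : ℝ) * (-g t₀) ^ k)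
    filter_upwards [self_mem_nhdsWithin] with ε (hε : 0 < ε)
    rw [hVol, integral_one_sub_sqrt_mul_pow_mul_rpow _ hε hp]
    simp only [Nat.choose_zero_right, Nat.choose_one_right]
    push_cast
    ring
  · refine EventuallyEq.trans_isBigO ?_ (hO fun k => ((n + 1).choose k : ℝ) *
      (k * (-g t₀) ^ (k - 1) * -(√(c ^ 2 / (2 * (c + 1))) * sin t₀ / cos t₀ ^ ((3 : ℝ) / 2))))
    filter_upwards [self_mem_nhdsWithin] with ε (hε : 0 < ε)
    rw [funext fun t => hVol t ε,
      ((hasDerivAt_integral_one_sub_sqrt_mul_pow_mul_rpow _ hε hp hg').const_mul volS).deriv]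
    simp only [Nat.choose_zero_right, Nat.choose_one_right]
    push_cast
    ring

/-- In the static-cylinder Fefferman–Graham frame with
`h(w,t) = 1 − √w √(2c²/((c+1) cos t))`, the regulated volume
`Vol t ε = vol[S^{d−1}] ∫_ε^1 h(w,t)^{d−1} w^{−d} dw` of the extremal slice
anchored at `t₀ ∈ (−π/2, π/2)` satisfies
`Vol t₀ ε = vol[S^{d−1}][ε^{−d+1}/(d−1) − ((d−1)/(d−3/2)) ε^{−d+3/2} g(t₀)] + O(ε^{−d+2})`,
and its time derivative is
`−ε^{−d+3/2} ((d−1)/(d−3/2)) vol[S^{d−1}] √(c²/(2(c+1))) sin t₀/(cos t₀)^{3/2} + O(ε^{−d+2})`,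
which is negative for `0 < t₀ < π/2`. -/
theorem static_cylinder_complexity_decrease (d : ℕ) (hd : 2 ≤ d)
    (c volS : ℝ) (hc : 0 < c) (hvolS : 0 < volS)
    (g : ℝ → ℝ) (hg : ∀ t : ℝ, g t = Real.sqrt (2 * c ^ 2 / ((c + 1) * Real.cos t)))
    (Vol : ℝ → ℝ → ℝ)
    (hVol : ∀ t ε : ℝ, Vol t ε =
      volS * ∫ w in ε..1, (1 - Real.sqrt w * g t) ^ (d - 1) * w ^ (-(d : ℝ)))
    (t₀ : ℝ) (ht₀ : t₀ ∈ Set.Ioo (-(π / 2)) (π / 2)) :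
    ((fun ε : ℝ => Vol t₀ ε - volS * (ε ^ (-(d : ℝ) + 1) / ((d : ℝ) - 1)
        - ((d : ℝ) - 1) / ((d : ℝ) - 3 / 2) * ε ^ (-(d : ℝ) + 3 / 2) * g t₀))
      =O[𝓝[>] 0] fun ε : ℝ => ε ^ (-(d : ℝ) + 2)) ∧
    ((fun ε : ℝ => deriv (fun t => Vol t ε) t₀
        + ε ^ (-(d : ℝ) + 3 / 2) * (((d : ℝ) - 1) / ((d : ℝ) - 3 / 2)) * volS *
          Real.sqrt (c ^ 2 / (2 * (c + 1))) * Real.sin t₀ / Real.cos t₀ ^ ((3 : ℝ) / 2))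
      =O[𝓝[>] 0] fun ε : ℝ => ε ^ (-(d : ℝ) + 2)) ∧
    (0 < t₀ → 0 < Real.sin t₀ / Real.cos t₀ ^ ((3 : ℝ) / 2)) :=
  static_cylinder_complexity_decrease_general d hd c volS hc g hg Vol hVol t₀ ht₀
end
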